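/- Consider a Tree-PIN source on a tree G = ([m], E) (edge pairs (T_e, Y_e) mutually independent across edges, terminal variables X_k given by the incident edge components), with m ≥ 2 and A = [m]. Then min_{λ∈Λ([m])} ( H(X_{[m]}) − Σ_{B∈Γ([m])} λ_B H(X_B | X_{B^c}) ) = min_{e∈E} I(T_e ; Y_e); that is, the Csiszár–Narayan secret-key-capacity expression for a Tree-PIN source equals the smallest mutual information carried by a single edge of the tree. -/

import Mathlib

open Finset

/-- Probability that the random variable `X : Ω → α` takes the value `a`,
for a probability mass function `p` on the finite sample space `Ω`. -/
noncomputable def probOf {Ω α : Type*} [Fintype Ω] [DecidableEq α]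
    (p : Ω → ℝ) (X : Ω → α) (a : α) : ℝ :=
  ∑ ω ∈ Finset.univ.filter (fun ω => X ω = a), p ω

/-- Shannon entropy (in nats) of the random variable `X : Ω → α` under the
probability mass function `p`. -/
noncomputable def entropy {Ω α : Type*} [Fintype Ω] [Fintype α] [DecidableEq α]
    (p : Ω → ℝ) (X : Ω → α) : ℝ :=
  ∑ a : α, Real.negMulLog (probOf p X a)

/-- Conditional Shannon entropy `H(X | Y) = H(X, Y) - H(Y)`. -/
noncomputable def condEntropy {Ω α β : Type*} [Fintype Ω]
    [Fintype α] [DecidableEq α] [Fintype β] [DecidableEq β]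
    (p : Ω → ℝ) (X : Ω → α) (Y : Ω → β) : ℝ :=
  entropy p (fun ω => (X ω, Y ω)) - entropy p Y

/-- Mutual information `I(X ; Y) = H(X) + H(Y) - H(X, Y)`. -/
noncomputable def mutualInfo {Ω α β : Type*} [Fintype Ω]
    [Fintype α] [DecidableEq α] [Fintype β] [DecidableEq β]
    (p : Ω → ℝ) (X : Ω → α) (Y : Ω → β) : ℝ :=
  entropy p X + entropy p Y - entropy p (fun ω => (X ω, Y ω))

/-- Conditional mutual information `I(X ; Y | Z) = H(X|Z) + H(Y|Z) - H(X,Y|Z)`. -/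
noncomputable def condMutualInfo {Ω α β γ : Type*} [Fintype Ω]
    [Fintype α] [DecidableEq α] [Fintype β] [DecidableEq β]
    [Fintype γ] [DecidableEq γ]
    (p : Ω → ℝ) (X : Ω → α) (Y : Ω → β) (Z : Ω → γ) : ℝ :=
  condEntropy p X Z + condEntropy p Y Z - condEntropy p (fun ω => (X ω, Y ω)) Z

/-- The undirected simple graph on `[m]` underlying the directed edges
`e ↦ (tl e, hd e)`. -/
def graphOf {m : ℕ} {ε : Type*} (tl hd : ε → Fin m) : SimpleGraph (Fin m) :=
  SimpleGraph.fromRel (fun i j => ∃ e, tl e = i ∧ hd e = j)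

/-- In a Tree-PIN source on the tree with directed edges `e = (tl e, hd e)`, the
variable observed by terminal `k` is the tuple of the components `T_e` for edges `e`
leaving `k` together with the components `Y_e` for edges `e` entering `k`. -/
def termRV {Ω : Type*} {m : ℕ} {ε : Type*} (tl hd : ε → Fin m)
    {Tt Yt : ε → Type*} (Te : ∀ e, Ω → Tt e) (Ye : ∀ e, Ω → Yt e) (k : Fin m) :
    Ω → ((∀ e : {e : ε // tl e = k}, Tt e.1) × (∀ e : {e : ε // hd e = k}, Yt e.1)) :=
  fun ω => (fun e => Te e.1 ω, fun e => Ye e.1 ω)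

/-- The tuple `X_B = (X_k : k ∈ B)` of terminal variables of a Tree-PIN source. -/
def termTuple {Ω : Type*} {m : ℕ} {ε : Type*} (tl hd : ε → Fin m)
    {Tt Yt : ε → Type*} (Te : ∀ e, Ω → Tt e) (Ye : ∀ e, Ω → Yt e)
    (B : Finset (Fin m)) :
    Ω → (∀ k : B, ((∀ e : {e : ε // tl e = k.1}, Tt e.1) ×
      (∀ e : {e : ε // hd e = k.1}, Yt e.1))) :=
  fun ω k => termRV tl hd Te Ye k.1 ω

/-- The edge pairs `(T_e, Y_e)` are mutually independent across edges. -/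
def IndepEdgePairs {Ω : Type*} [Fintype Ω] {ε : Type*} [Fintype ε]
    {Tt Yt : ε → Type*} [∀ e, Fintype (Tt e)] [∀ e, DecidableEq (Tt e)]
    [∀ e, Fintype (Yt e)] [∀ e, DecidableEq (Yt e)]
    (p : Ω → ℝ) (Te : ∀ e, Ω → Tt e) (Ye : ∀ e, Ω → Yt e) : Prop :=
  ∀ x : ∀ e, Tt e × Yt e,
    probOf p (fun ω e => (Te e ω, Ye e ω)) x
      = ∏ e : ε, probOf p (fun ω => (Te e ω, Ye e ω)) (x e)

/-- `Γ(A)`: the family of all nonempty proper subsets `B ⊊ [m]` with `A ⊄ B`. -/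
def Gamma (m : ℕ) (A : Finset (Fin m)) : Finset (Finset (Fin m)) :=
  Finset.univ.filter (fun B => B.Nonempty ∧ B ≠ Finset.univ ∧ ¬ A ⊆ B)

/-- `λ ∈ Λ(A)`: a fractional partition, i.e. `0 ≤ λ_B ≤ 1` for every `B ∈ Γ(A)`
and `Σ_{B ∈ Γ(A) : j ∈ B} λ_B = 1` for every `j ∈ [m]`. -/
def memLambda (m : ℕ) (A : Finset (Fin m)) (lam : Finset (Fin m) → ℝ) : Prop :=
  (∀ B ∈ Gamma m A, 0 ≤ lam B ∧ lam B ≤ 1) ∧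
  ∀ j : Fin m, ∑ B ∈ (Gamma m A).filter (fun B => j ∈ B), lam B = 1

/-!
Since the edge pairs are independent, the entropy of every terminal tuple `X_C` is a sum of
per-edge terms, and for `λ ∈ Λ([m])` the Csiszár–Narayan expression collapses to
`∑ₑ wₑ(λ) I(Tₑ; Yₑ)`, where `wₑ(λ)` is the `λ`-weight of the sets `B` containing the tail of `e`
but not its head (by the partition constraints, equally the head but not the tail).
Rooting the tree at `r` and orienting every edge away from `r`, each `B ∋ r` in `Γ` is left by
some edge, whence `∑ₑ wₑ(λ) ≥ ∑_{B ∋ r} λ_B = 1` and the expression is at least `minₑ I(Tₑ; Yₑ)`.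
Equality holds for `λ = 𝟙_S + 𝟙_{Sᶜ}`, where `S` is one side of the tree cut at a minimising
edge: then `wₑ(λ) = 1` for that edge and `0` for all others.
-/

section Entropy

variable {Ω α β : Type*} [Fintype Ω] [DecidableEq α] [DecidableEq β] (p : Ω → ℝ)

lemma probOf_nonneg (hp : ∀ ω, 0 ≤ p ω) (X : Ω → α) (a : α) : 0 ≤ probOf p X a :=
  Finset.sum_nonneg fun _ _ => hp _

lemma le_probOf_self (hp : ∀ ω, 0 ≤ p ω) (X : Ω → α) (ω : Ω) : p ω ≤ probOf p X (X ω) :=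
  Finset.single_le_sum (f := p) (fun _ _ => hp _) (Finset.mem_filter.2 ⟨Finset.mem_univ _, rfl⟩)

lemma probOf_le_probOf_comp (hp : ∀ ω, 0 ≤ p ω) (X : Ω → α) (f : α → β) (a : α) :
    probOf p X a ≤ probOf p (fun ω => f (X ω)) (f a) :=
  Finset.sum_le_sum_of_subset_of_nonneg
    (fun ω hω => by simp only [Finset.mem_filter] at hω ⊢; exact ⟨hω.1, by rw [hω.2]⟩)
    fun _ _ _ => hp _

variable [Fintype α]

lemma sum_probOf (X : Ω → α) : ∑ a, probOf p X a = ∑ ω, p ω :=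
  Finset.sum_fiberwise univ X p

lemma sum_probOf_mul (X : Ω → α) (f : α → ℝ) :
    ∑ a, probOf p X a * f a = ∑ ω, p ω * f (X ω) := by
  simp only [probOf, Finset.sum_mul]
  rw [← Finset.sum_fiberwise univ X]
  refine Finset.sum_congr rfl fun a _ => Finset.sum_congr rfl fun ω hω => ?_
  rw [(Finset.mem_filter.1 hω).2]

lemma probOf_comp (X : Ω → α) (f : α → β) (b : β) :
    probOf p (fun ω => f (X ω)) b = ∑ a with f a = b, probOf p X a := by
  simp only [probOf]
  rw [Finset.sum_fiberwise_eq_sum_filter]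
  congr 1
  ext ω
  simp

variable [Fintype β]

lemma entropy_eq_neg_sum_mul_log (X : Ω → α) :
    entropy p X = -∑ ω, p ω * Real.log (probOf p X (X ω)) := by
  simp only [entropy, Real.negMulLog, neg_mul, Finset.sum_neg_distrib, sum_probOf_mul]

lemma entropy_congr (X : Ω → α) (Y : Ω → β) (h : ∀ ω ω', X ω = X ω' ↔ Y ω = Y ω') :
    entropy p X = entropy p Y := by
  have hprob : ∀ ω, probOf p X (X ω) = probOf p Y (Y ω) := fun ω => by
    unfold probOf
    rw [Finset.filter_congr fun ω' _ => h ω' ω]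
  simp only [entropy_eq_neg_sum_mul_log, hprob]

lemma entropy_comp_of_injective {f : α → β} (hf : Function.Injective f) (X : Ω → α) :
    entropy p (fun ω => f (X ω)) = entropy p X :=
  entropy_congr p _ _ fun _ _ => hf.eq_iff

lemma entropy_swap (X : Ω → α) (Y : Ω → β) :
    entropy p (fun ω => (Y ω, X ω)) = entropy p (fun ω => (X ω, Y ω)) :=
  entropy_congr p _ _ fun _ _ => by simp only [Prod.mk.injEq, and_comm]

lemma condEntropy_eq_entropy_sub {γ : Type*} [Fintype γ] [DecidableEq γ] (X : Ω → α) (Y : Ω → β)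
    (Z : Ω → γ) (h : ∀ ω ω', X ω = X ω' ∧ Y ω = Y ω' ↔ Z ω = Z ω') :
    condEntropy p X Y = entropy p Z - entropy p Y := by
  rw [condEntropy, entropy_congr p _ Z fun ω ω' => Prod.ext_iff.trans (h ω ω')]

lemma entropy_const (hp1 : ∑ ω, p ω = 1) (c : α) : entropy p (fun _ => c) = 0 := by
  simp [entropy_eq_neg_sum_mul_log, probOf, hp1]

lemma sub_mul_le_mul_log_sub_log_sub_log {q a b : ℝ} (hq : 0 ≤ q) (ha : q ≤ a) (hb : q ≤ b) :
    q - a * b ≤ q * (Real.log q - Real.log a - Real.log b) := by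
  rcases hq.eq_or_lt with rfl | hq
  · simpa using mul_nonneg ha hb
  have hlog := Real.log_le_sub_one_of_pos (show 0 < a * b / q by
    have := hq.trans_le ha; have := hq.trans_le hb; positivity)
  rw [Real.log_div (by nlinarith) hq.ne', Real.log_mul (by linarith) (by linarith)] at hlog
  have := mul_le_mul_of_nonneg_left hlog hq.le
  have hcancel : q * (a * b / q - 1) = a * b - q := by field_simp
  linarith

theorem mutualInfo_nonneg (hp : ∀ ω, 0 ≤ p ω) (hp1 : ∑ ω, p ω = 1) (X : Ω → α) (Y : Ω → β) :
    0 ≤ mutualInfo p X Y := by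
  have hX : ∑ z, probOf p (fun ω => (X ω, Y ω)) z * Real.log (probOf p X z.1)
      = ∑ ω, p ω * Real.log (probOf p X (X ω)) := sum_probOf_mul p _ _
  have hY : ∑ z, probOf p (fun ω => (X ω, Y ω)) z * Real.log (probOf p Y z.2)
      = ∑ ω, p ω * Real.log (probOf p Y (Y ω)) := sum_probOf_mul p _ _
  have hI : mutualInfo p X Y = ∑ z, probOf p (fun ω => (X ω, Y ω)) z *
      (Real.log (probOf p (fun ω => (X ω, Y ω)) z) - Real.log (probOf p X z.1)
        - Real.log (probOf p Y z.2)) := by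
    simp only [mutualInfo, entropy_eq_neg_sum_mul_log, mul_sub, Finset.sum_sub_distrib, hX, hY,
      sum_probOf_mul]
    ring
  have hgibbs : ∀ z : α × β,
      probOf p (fun ω => (X ω, Y ω)) z - probOf p X z.1 * probOf p Y z.2
        ≤ probOf p (fun ω => (X ω, Y ω)) z * (Real.log (probOf p (fun ω => (X ω, Y ω)) z)
          - Real.log (probOf p X z.1) - Real.log (probOf p Y z.2)) := fun z =>
    sub_mul_le_mul_log_sub_log_sub_log (probOf_nonneg p hp _ z)
      (probOf_le_probOf_comp p hp _ Prod.fst z) (probOf_le_probOf_comp p hp _ Prod.snd z)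
  calc (0 : ℝ) = ∑ z : α × β,
        (probOf p (fun ω => (X ω, Y ω)) z - probOf p X z.1 * probOf p Y z.2) := by
        rw [Finset.sum_sub_distrib, sum_probOf, Fintype.sum_prod_type]
        simp only [← Finset.mul_sum, ← Finset.sum_mul, sum_probOf, hp1]
        norm_num
    _ ≤ mutualInfo p X Y := hI ▸ Finset.sum_le_sum fun z _ => hgibbs z

end Entropy

section Independence

variable {Ω ι : Type*} [Fintype Ω] [Fintype ι] {κ γ : ι → Type*}
  [∀ i, DecidableEq (κ i)] [∀ i, DecidableEq (γ i)] (p : Ω → ℝ)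

def IndepFamily (W : ∀ i, Ω → κ i) : Prop :=
  ∀ x : ∀ i, κ i, probOf p (fun ω i => W i ω) x = ∏ i, probOf p (W i) (x i)

variable [DecidableEq ι] [∀ i, Fintype (κ i)]

lemma IndepFamily.comp {W : ∀ i, Ω → κ i} (h : IndepFamily p W)
    (g : ∀ i, κ i → γ i) : IndepFamily p fun i ω => g i (W i ω) := by
  unfold IndepFamily at h ⊢
  intro y
  rw [probOf_comp p (fun ω i => W i ω) (fun x i => g i (x i))]
  have hcomp : ∀ i, probOf p (fun ω => g i (W i ω)) (y i)
      = ∑ a with g i a = y i, probOf p (W i) a := fun i => probOf_comp p (W i) (g i) (y i)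
  simp_rw [h, hcomp, Finset.prod_univ_sum]
  congr 1
  ext x
  simp [funext_iff, Fintype.mem_piFinset]

theorem entropy_pi_eq_sum_of_indepFamily (hp : ∀ ω, 0 ≤ p ω) {W : ∀ i, Ω → κ i}
    (h : IndepFamily p W) : entropy p (fun ω i => W i ω) = ∑ i, entropy p (W i) := by
  unfold IndepFamily at h
  simp only [entropy_eq_neg_sum_mul_log, h, Finset.sum_neg_distrib]
  rw [Finset.sum_comm]
  refine congrArg Neg.neg (Finset.sum_congr rfl fun ω _ => ?_)
  rcases (hp ω).eq_or_lt with hω | hω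
  · simp [← hω]
  rw [Real.log_prod fun i _ => (hω.trans_le (le_probOf_self p hp (W i) ω)).ne', Finset.mul_sum]

end Independence

section Masking

variable {Ω α β : Type*} [Fintype Ω] [Fintype α] [DecidableEq α] [Fintype β] [DecidableEq β]
  (p : Ω → ℝ)

def maskPair (a b : Prop) [Decidable a] [Decidable b] (z : α × β) : Option α × Option β :=
  (if a then some z.1 else none, if b then some z.2 else none)

lemma entropy_maskPair (hp1 : ∑ ω, p ω = 1) (a b : Prop) [Decidable a] [Decidable b]
    (X : Ω → α) (Y : Ω → β) :
    entropy p (fun ω => maskPair a b (X ω, Y ω))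
      = (if a then entropy p X else 0) + (if b then entropy p Y else 0)
        - (if a ∧ b then mutualInfo p X Y else 0) := by
  by_cases ha : a <;> by_cases hb : b <;> simp only [maskPair, ha, hb, if_true, if_false]
  · rw [entropy_comp_of_injective p (f := fun z : α × β => (some z.1, some z.2))
      (fun z w h => by simpa [Prod.ext_iff] using h) (fun ω => (X ω, Y ω)), mutualInfo]
    simp
  · simpa using entropy_comp_of_injective p (f := fun x : α => (some x, (none : Option β)))
      (fun x y h => by simpa using h) X
  · simpa using entropy_comp_of_injective p (f := fun y : β => ((none : Option α), some y))
      (fun x y h => by simpa using h) Y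
  · simpa using entropy_const p hp1 ((none, none) : Option α × Option β)

end Masking

lemma mem_Gamma_univ {m : ℕ} {B : Finset (Fin m)} : B ∈ Gamma m univ ↔ B.Nonempty ∧ B ≠ univ := by
  simp [Gamma, Finset.univ_subset_iff]

section FractionalPartition

variable {m : ℕ}

def sepWeight (lam : Finset (Fin m) → ℝ) (u v : Fin m) : ℝ :=
  ∑ B ∈ Gamma m univ with u ∈ B ∧ v ∉ B, lam B

namespace memLambda

variable {lam : Finset (Fin m) → ℝ} (hlam : memLambda m univ lam)
include hlam

lemma sepWeight_nonneg (u v : Fin m) : 0 ≤ sepWeight lam u v :=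
  Finset.sum_nonneg fun B hB => (hlam.1 B (Finset.mem_filter.1 hB).1).1

lemma sepWeight_eq (u v : Fin m) :
    sepWeight lam u v = 1 - ∑ B ∈ Gamma m univ with u ∈ B ∧ v ∈ B, lam B := by
  have h := Finset.sum_filter_add_sum_filter_not ((Gamma m univ).filter (u ∈ ·)) (v ∈ ·) lam
  rw [Finset.filter_filter, Finset.filter_filter, hlam.2 u] at h
  rw [sepWeight]
  linarith

lemma sepWeight_comm (u v : Fin m) : sepWeight lam u v = sepWeight lam v u := by
  simp only [hlam.sepWeight_eq, and_comm]

lemma sum_mul_ite_mem (j : Fin m) (x : ℝ) :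
    ∑ B ∈ Gamma m univ, lam B * (if j ∈ B then x else 0) = x := by
  simp only [mul_ite, mul_zero, ← Finset.sum_filter, ← Finset.sum_mul, hlam.2 j, one_mul]

lemma sum_mul_ite_mem_and_mem (u v : Fin m) (x : ℝ) :
    ∑ B ∈ Gamma m univ, lam B * (if u ∈ B ∧ v ∈ B then x else 0)
      = (1 - sepWeight lam u v) * x := by
  simp only [mul_ite, mul_zero, ← Finset.sum_filter, ← Finset.sum_mul, hlam.sepWeight_eq,
    sub_sub_cancel]

end memLambda

def bipartitionLambda (S : Finset (Fin m)) (B : Finset (Fin m)) : ℝ :=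
  (if B = S then 1 else 0) + (if B = Sᶜ then 1 else 0)

variable {S : Finset (Fin m)} (hS : S ∈ Gamma m univ)
include hS

lemma compl_mem_Gamma_univ : Sᶜ ∈ Gamma m univ := by
  rw [mem_Gamma_univ] at hS ⊢
  exact ⟨Finset.nonempty_iff_ne_empty.2 (by rw [Ne, Finset.compl_eq_empty_iff]; exact hS.2),
    (Finset.compl_ne_univ_iff_nonempty S).2 hS.1⟩

lemma sum_filter_bipartitionLambda (P : Finset (Fin m) → Prop) [DecidablePred P] :
    ∑ B ∈ Gamma m univ with P B, bipartitionLambda S B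
      = (if P S then 1 else 0) + (if P Sᶜ then 1 else 0) := by
  simp [bipartitionLambda, Finset.sum_add_distrib, hS, compl_mem_Gamma_univ hS]

lemma memLambda_bipartitionLambda : memLambda m univ (bipartitionLambda S) := by
  have hne : S ≠ Sᶜ := fun h => by
    obtain ⟨j, hj⟩ := (mem_Gamma_univ.1 hS).1
    exact Finset.mem_compl.1 (h ▸ hj) hj
  refine ⟨fun B _ => ?_, fun j => ?_⟩
  · by_cases h : B = S <;> by_cases h' : B = Sᶜ <;> simp_all [bipartitionLambda]
  · rw [sum_filter_bipartitionLambda hS]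
    by_cases hj : j ∈ S <;> simp [hj]

lemma sepWeight_bipartitionLambda (u v : Fin m) :
    sepWeight (bipartitionLambda S) u v = if (u ∈ S ↔ v ∈ S) then 0 else 1 := by
  rw [sepWeight, sum_filter_bipartitionLambda hS]
  by_cases hu : u ∈ S <;> by_cases hv : v ∈ S <;> simp [hu, hv]

end FractionalPartition

section TreePIN

variable {Ω : Type*} {m : ℕ} {ε : Type*} (tl hd : ε → Fin m) {Tt Yt : ε → Type*}
  (Te : ∀ e, Ω → Tt e) (Ye : ∀ e, Ω → Yt e)

lemma termTuple_eq_iff (C : Finset (Fin m)) (ω ω' : Ω) :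
    termTuple tl hd Te Ye C ω = termTuple tl hd Te Ye C ω'
      ↔ ∀ e, (tl e ∈ C → Te e ω = Te e ω') ∧ (hd e ∈ C → Ye e ω = Ye e ω') := by
  refine ⟨fun h e => ⟨fun he => ?_, fun he => ?_⟩, fun h => ?_⟩
  · exact congrFun (congrArg Prod.fst (congrFun h ⟨tl e, he⟩)) ⟨e, rfl⟩
  · exact congrFun (congrArg Prod.snd (congrFun h ⟨hd e, he⟩)) ⟨e, rfl⟩
  · funext k
    exact Prod.ext (funext fun e => (h e.1).1 (by rw [e.2]; exact k.2))
      (funext fun e => (h e.1).2 (by rw [e.2]; exact k.2))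

variable [Fintype Ω] [Fintype ε] [DecidableEq ε] [∀ e, Fintype (Tt e)] [∀ e, DecidableEq (Tt e)]
  [∀ e, Fintype (Yt e)] [∀ e, DecidableEq (Yt e)] (p : Ω → ℝ)
  (hp : ∀ ω, 0 ≤ p ω) (hp1 : ∑ ω, p ω = 1) (hindep : IndepEdgePairs p Te Ye)
include hp hindep

theorem entropy_termRV_eq_sum :
    entropy p (fun ω (k : Fin m) => termRV tl hd Te Ye k ω)
      = ∑ e, entropy p (fun ω => (Te e ω, Ye e ω)) := by
  rw [← entropy_pi_eq_sum_of_indepFamily p hp hindep]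
  refine entropy_congr p _ _ fun ω ω' => ⟨fun h => funext fun e => ?_, fun h => funext fun k => ?_⟩
  · exact Prod.ext (congrFun (congrArg Prod.fst (congrFun h (tl e))) ⟨e, rfl⟩)
      (congrFun (congrArg Prod.snd (congrFun h (hd e))) ⟨e, rfl⟩)
  · exact Prod.ext (funext fun e => congrArg Prod.fst (congrFun h e.1))
      (funext fun e => congrArg Prod.snd (congrFun h e.1))

include hp1

-- `X_C` is a coordinatewise function of the edge pairs: it sees `Tₑ` iff `tl e ∈ C` and `Yₑ` iff
-- `hd e ∈ C`.
theorem entropy_termTuple (C : Finset (Fin m)) :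
    entropy p (termTuple tl hd Te Ye C)
      = ∑ e, ((if tl e ∈ C then entropy p (Te e) else 0)
        + (if hd e ∈ C then entropy p (Ye e) else 0)
        - (if tl e ∈ C ∧ hd e ∈ C then mutualInfo p (Te e) (Ye e) else 0)) := by
  have hmask : IndepFamily p fun e ω => maskPair (tl e ∈ C) (hd e ∈ C) (Te e ω, Ye e ω) :=
    IndepFamily.comp p hindep fun e => maskPair (tl e ∈ C) (hd e ∈ C)
  rw [← Finset.sum_congr rfl fun e _ => entropy_maskPair p hp1 _ _ (Te e) (Ye e),
    ← entropy_pi_eq_sum_of_indepFamily p hp hmask]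
  refine entropy_congr p _ _ fun ω ω' => ?_
  rw [termTuple_eq_iff, funext_iff]
  refine forall_congr' fun e => ?_
  by_cases ht : tl e ∈ C <;> by_cases hh : hd e ∈ C <;> simp [maskPair, ht, hh]

theorem condEntropy_termTuple (B : Finset (Fin m)) :
    condEntropy p (termTuple tl hd Te Ye B) (termTuple tl hd Te Ye Bᶜ)
      = ∑ e, ((if tl e ∈ B then condEntropy p (Te e) (Ye e) else 0)
        + (if hd e ∈ B then condEntropy p (Ye e) (Te e) else 0)
        + (if tl e ∈ B ∧ hd e ∈ B then mutualInfo p (Te e) (Ye e) else 0)) := by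
  rw [condEntropy_eq_entropy_sub p _ _ (termTuple tl hd Te Ye univ),
    entropy_termTuple tl hd Te Ye p hp hp1 hindep, entropy_termTuple tl hd Te Ye p hp hp1 hindep,
    ← Finset.sum_sub_distrib]
  · refine Finset.sum_congr rfl fun e _ => ?_
    have hswap := entropy_swap p (Te e) (Ye e)
    simp only [condEntropy, mutualInfo, hswap, Finset.mem_univ, Finset.mem_compl]
    by_cases ht : tl e ∈ B <;> by_cases hh : hd e ∈ B <;>
      simp only [ht, hh, and_self, and_true, and_false, not_true_eq_false,
        not_false_eq_true, if_true, if_false] <;> ring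
  · intro ω ω'
    simp only [termTuple_eq_iff, Finset.mem_univ, Finset.mem_compl, true_implies, ← forall_and]
    refine forall_congr' fun e => ?_
    by_cases ht : tl e ∈ B <;> by_cases hh : hd e ∈ B <;> simp [ht, hh, and_comm]

theorem cnExpression_eq_sum_sepWeight_mul_mutualInfo {lam : Finset (Fin m) → ℝ}
    (hlam : memLambda m univ lam) :
    entropy p (fun ω (k : Fin m) => termRV tl hd Te Ye k ω)
      - ∑ B ∈ Gamma m univ,
          lam B * condEntropy p (termTuple tl hd Te Ye B) (termTuple tl hd Te Ye Bᶜ)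
      = ∑ e, sepWeight lam (tl e) (hd e) * mutualInfo p (Te e) (Ye e) := by
  simp only [entropy_termRV_eq_sum tl hd Te Ye p hp hindep,
    condEntropy_termTuple tl hd Te Ye p hp hp1 hindep, Finset.mul_sum]
  rw [Finset.sum_comm, ← Finset.sum_sub_distrib]
  refine Finset.sum_congr rfl fun e _ => ?_
  have hswap := entropy_swap p (Te e) (Ye e)
  simp only [mul_add, Finset.sum_add_distrib, hlam.sum_mul_ite_mem,
    hlam.sum_mul_ite_mem_and_mem, condEntropy, mutualInfo, hswap]
  ring

end TreePIN

namespace SimpleGraph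

variable {V : Type*} {G : SimpleGraph V}

lemma Connected.exists_adj_dist_lt (hG : G.Connected) {r x : V} (hx : r ≠ x) :
    ∃ w, G.Adj w x ∧ G.dist r w < G.dist r x := by
  obtain ⟨q, hq⟩ := hG.exists_walk_length_eq_dist r x
  have hnil : ¬ q.Nil := fun h => hx h.eq
  refine ⟨q.penultimate, q.adj_penultimate hnil, ?_⟩
  have := Walk.length_dropLast_add_one hnil
  have := G.dist_le q.dropLast
  omega

lemma Connected.exists_adj_mem_not_mem_dist_lt (hG : G.Connected) {r : V} {B : Set V}
    (hr : r ∈ B) (hB : ∃ x, x ∉ B) :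
    ∃ w x, w ∈ B ∧ x ∉ B ∧ G.Adj w x ∧ G.dist r w < G.dist r x := by
  obtain ⟨x, hx, hmin⟩ := (measure (G.dist r)).wf.has_min {x | x ∉ B} hB
  obtain ⟨w, hadj, hlt⟩ := hG.exists_adj_dist_lt (fun h : r = x => hx (h ▸ hr))
  exact ⟨w, x, by_contra fun hw => hmin w hw hlt, hx, hadj, hlt⟩

end SimpleGraph

section Graph

variable {m : ℕ} {ε : Type*} (tl hd : ε → Fin m)

lemma graphOf_adj_iff {u v : Fin m} :
    (graphOf tl hd).Adj u v ↔ u ≠ v ∧ ∃ e, (tl e = u ∧ hd e = v) ∨ (tl e = v ∧ hd e = u) := by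
  simp only [graphOf, SimpleGraph.fromRel_adj, ← exists_or]

lemma graphOf_adj_of_ne {e : ε} (h : tl e ≠ hd e) : (graphOf tl hd).Adj (tl e) (hd e) :=
  (graphOf_adj_iff tl hd).2 ⟨h, e, .inl ⟨rfl, rfl⟩⟩

lemma exists_finset_cutting_only_edge (htree : (graphOf tl hd).IsTree) (hloop : ∀ e, tl e ≠ hd e)
    (hinj : Function.Injective fun e => s(tl e, hd e)) (e₀ : ε) :
    ∃ S : Finset (Fin m), tl e₀ ∈ S ∧ hd e₀ ∉ S ∧ ∀ e ≠ e₀, (tl e ∈ S ↔ hd e ∈ S) := by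
  classical
  set G' := (graphOf tl hd).deleteEdges {s(tl e₀, hd e₀)}
  have hbridge : ¬ G'.Reachable (tl e₀) (hd e₀) :=
    SimpleGraph.isBridge_iff.1 (SimpleGraph.isAcyclic_iff_forall_isBridge.1 htree.2
      ((graphOf_adj_of_ne tl hd (hloop e₀))))
  refine ⟨univ.filter (G'.Reachable (tl e₀)), by simp, by simpa using hbridge, fun e he => ?_⟩
  have hadj : G'.Adj (tl e) (hd e) :=
    (SimpleGraph.deleteEdges_adj ..).2 ⟨graphOf_adj_of_ne tl hd (hloop e), fun h => he (hinj h)⟩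
  simp only [Finset.mem_filter, Finset.mem_univ, true_and]
  exact ⟨fun h => h.trans hadj.reachable, fun h => h.trans hadj.symm.reachable⟩

end Graph

theorem one_le_sum_sepWeight {m : ℕ} {ε : Type*} [Fintype ε] (tl hd : ε → Fin m)
    (hconn : (graphOf tl hd).Connected) {lam : Finset (Fin m) → ℝ} (hlam : memLambda m univ lam)
    (r : Fin m) : 1 ≤ ∑ e, sepWeight lam (tl e) (hd e) := by
  set G := graphOf tl hd
  let away : ε → Fin m × Fin m := fun e =>
    if G.dist r (tl e) ≤ G.dist r (hd e) then (tl e, hd e) else (hd e, tl e)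
  have horient : ∀ e, sepWeight lam (tl e) (hd e) = sepWeight lam (away e).1 (away e).2 := by
    intro e
    by_cases h : G.dist r (tl e) ≤ G.dist r (hd e)
    · simp only [away, if_pos h]
    · simp only [away, if_neg h, hlam.sepWeight_comm (tl e)]
  have hcross : ∀ B ∈ Gamma m univ, r ∈ B → ∃ e, (away e).1 ∈ B ∧ (away e).2 ∉ B := by
    intro B hB hr
    obtain ⟨w, x, hw, hx, hadj, hlt⟩ :=
      hconn.exists_adj_mem_not_mem_dist_lt (B := (B : Set (Fin m))) hr
        (by simpa [Finset.eq_univ_iff_forall] using (mem_Gamma_univ.1 hB).2)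
    obtain ⟨-, e, ⟨rfl, rfl⟩ | ⟨rfl, rfl⟩⟩ := (graphOf_adj_iff tl hd).1 hadj
    · exact ⟨e, by simp_all [away, hlt.le]⟩
    · exact ⟨e, by simp_all [away, not_le.2 hlt]⟩
  calc (1 : ℝ) = ∑ B ∈ Gamma m univ, if r ∈ B then lam B else 0 := by
        rw [← Finset.sum_filter, hlam.2 r]
    _ ≤ ∑ B ∈ Gamma m univ, ∑ e, if (away e).1 ∈ B ∧ (away e).2 ∉ B then lam B else 0 := by
        refine Finset.sum_le_sum fun B hB => ?_
        have hnonneg := (hlam.1 B hB).1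
        split_ifs with hr
        · obtain ⟨e, he⟩ := hcross B hB hr
          exact (if_pos he).symm.le.trans (Finset.single_le_sum
            (f := fun e => if (away e).1 ∈ B ∧ (away e).2 ∉ B then lam B else 0)
            (fun e _ => by positivity) (Finset.mem_univ e))
        · exact Finset.sum_nonneg fun e _ => by positivity
    _ = ∑ e, sepWeight lam (tl e) (hd e) := by
        rw [Finset.sum_comm]
        exact Finset.sum_congr rfl fun e _ => by rw [horient, sepWeight, Finset.sum_filter]

lemma ciInf_le_sum_mul {ι : Type*} [Fintype ι] [Nonempty ι] {f w : ι → ℝ} (hf : ∀ i, 0 ≤ f i)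
    (hw : ∀ i, 0 ≤ w i) (hsum : 1 ≤ ∑ i, w i) : ⨅ i, f i ≤ ∑ i, w i * f i :=
  calc ⨅ i, f i ≤ (∑ i, w i) * ⨅ i, f i := le_mul_of_one_le_left (le_ciInf hf) hsum
    _ = ∑ i, w i * ⨅ i, f i := Finset.sum_mul ..
    _ ≤ ∑ i, w i * f i := Finset.sum_le_sum fun i _ =>
        mul_le_mul_of_nonneg_left (ciInf_le (Finite.bddBelow_range f) i) (hw i)

theorem treePIN_CN_expression_eq_min_edge_mutualInfo_general
    {Ω : Type*} [Fintype Ω] {m : ℕ} {ε : Type*} [Fintype ε] [DecidableEq ε]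
    [Nonempty ε]
    (tl hd : ε → Fin m)
    {Tt Yt : ε → Type*} [∀ e, Fintype (Tt e)] [∀ e, DecidableEq (Tt e)]
    [∀ e, Fintype (Yt e)] [∀ e, DecidableEq (Yt e)]
    (p : Ω → ℝ) (hp : ∀ ω, 0 ≤ p ω) (hp1 : ∑ ω : Ω, p ω = 1)
    (Te : ∀ e, Ω → Tt e) (Ye : ∀ e, Ω → Yt e)
    -- the underlying undirected graph is a tree with edge set `ε`
    (htree : (graphOf tl hd).IsTree)
    (hloop : ∀ e, tl e ≠ hd e)
    (hinj : Function.Injective (fun e => s(tl e, hd e)))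
    -- the edge pairs are mutually independent across edges
    (hindep : IndepEdgePairs p Te Ye) :
    -- `min_{λ ∈ Λ([m])} (H(X_[m]) − Σ_{B ∈ Γ([m])} λ_B H(X_B|X_{B^c}))
    --   = min_{e ∈ E} I(T_e ; Y_e)` (and the minimum over `λ` is attained)
    IsLeast {x : ℝ | ∃ lam : Finset (Fin m) → ℝ, memLambda m Finset.univ lam ∧
        x = entropy p (fun ω (k : Fin m) => termRV tl hd Te Ye k ω)
          - ∑ B ∈ Gamma m Finset.univ,
              lam B * condEntropy p (termTuple tl hd Te Ye B) (termTuple tl hd Te Ye Bᶜ)}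
      (⨅ e : ε, mutualInfo p (Te e) (Ye e)) := by
  have hcn := fun lam (hlam : memLambda m univ lam) =>
    cnExpression_eq_sum_sepWeight_mul_mutualInfo tl hd Te Ye p hp hp1 hindep hlam
  refine ⟨?_, ?_⟩
  · obtain ⟨e₀, he₀⟩ := Finite.exists_min fun e => mutualInfo p (Te e) (Ye e)
    obtain ⟨S, htl, hhd, hS⟩ := exists_finset_cutting_only_edge tl hd htree hloop hinj e₀
    have hSΓ : S ∈ Gamma m univ :=
      mem_Gamma_univ.2 ⟨⟨_, htl⟩, fun h => hhd (h ▸ Finset.mem_univ _)⟩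
    refine ⟨bipartitionLambda S, memLambda_bipartitionLambda hSΓ, ?_⟩
    rw [hcn _ (memLambda_bipartitionLambda hSΓ), Finset.sum_eq_single e₀]
    · rw [sepWeight_bipartitionLambda hSΓ, if_neg (by simp [htl, hhd]), one_mul]
      exact le_antisymm (ciInf_le (Finite.bddBelow_range _) e₀) (le_ciInf he₀)
    · intro e _ he
      rw [sepWeight_bipartitionLambda hSΓ, if_pos (hS e he), zero_mul]
    · exact fun h => absurd (Finset.mem_univ e₀) h
  · rintro x ⟨lam, hlam, rfl⟩
    rw [hcn lam hlam]
    exact ciInf_le_sum_mul (fun _ => mutualInfo_nonneg p hp hp1 _ _)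
      (fun _ => hlam.sepWeight_nonneg _ _)
      (one_le_sum_sepWeight tl hd htree.1 hlam (tl (Classical.arbitrary ε)))

theorem treePIN_CN_expression_eq_min_edge_mutualInfo
    {Ω : Type*} [Fintype Ω] {m : ℕ} {ε : Type*} [Fintype ε] [DecidableEq ε]
    [Nonempty ε]
    (tl hd : ε → Fin m)
    {Tt Yt : ε → Type*} [∀ e, Fintype (Tt e)] [∀ e, DecidableEq (Tt e)]
    [∀ e, Fintype (Yt e)] [∀ e, DecidableEq (Yt e)]
    (p : Ω → ℝ) (hp : ∀ ω, 0 ≤ p ω) (hp1 : ∑ ω : Ω, p ω = 1)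
    (Te : ∀ e, Ω → Tt e) (Ye : ∀ e, Ω → Yt e)
    (hm : 2 ≤ m)
    -- the underlying undirected graph is a tree with edge set `ε`
    (htree : (graphOf tl hd).IsTree)
    (hloop : ∀ e, tl e ≠ hd e)
    (hinj : Function.Injective (fun e => s(tl e, hd e)))
    -- the edge pairs are mutually independent across edges
    (hindep : IndepEdgePairs p Te Ye) :
    -- `min_{λ ∈ Λ([m])} (H(X_[m]) − Σ_{B ∈ Γ([m])} λ_B H(X_B|X_{B^c}))
    --   = min_{e ∈ E} I(T_e ; Y_e)` (and the minimum over `λ` is attained)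
    IsLeast {x : ℝ | ∃ lam : Finset (Fin m) → ℝ, memLambda m Finset.univ lam ∧
        x = entropy p (fun ω (k : Fin m) => termRV tl hd Te Ye k ω)
          - ∑ B ∈ Gamma m Finset.univ,
              lam B * condEntropy p (termTuple tl hd Te Ye B) (termTuple tl hd Te Ye Bᶜ)}
      (⨅ e : ε, mutualInfo p (Te e) (Ye e)) :=
  treePIN_CN_expression_eq_min_edge_mutualInfo_general tl hd p hp hp1 Te Ye htree hloop hinj hindep
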